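/- Let (U, V) ∈ {−1,+1}^{n×c} × {−1,+1}^{n×c} and let (U', V') be obtained from (U, V) by any finite sequence of single-column updates, where each step replaces one column U_{*k} (respectively V_{*k}) by a vector u' ∈ {−1,+1}^n satisfying u'_i·b_i = |b_i| for all i with b the corresponding surrogate-gradient vector b = g(current column) + (nλ²/(4c²))·(current column). Then L(U', V') ≥ L(U, V). In particular, one full iteration of Algorithm 1 (updating all c columns of U via rule (3) and then all c columns of V via rule (4)) never decreases the DLFH objective. -/

import Mathlib

open scoped BigOperators

/-- The logistic (sigmoid) function. -/
noncomputable def logistic (t : ℝ) : ℝ := 1 / (1 + Real.exp (-t))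

/-- `Θ_{ij} = (λ/c)·Σ_k U_{ik}·V_{jk}`. -/
noncomputable def dlfhTheta {n c : ℕ} (lam : ℝ) (U V : Fin n → Fin c → ℝ)
    (i j : Fin n) : ℝ :=
  (lam / c) * ∑ k : Fin c, U i k * V j k

/-- The DLFH objective `L(U,V) = Σ_{i,j} [S_{ij}·Θ_{ij} − log(1+exp(Θ_{ij}))]`. -/
noncomputable def dlfhObj {n c : ℕ} (lam : ℝ) (S : Fin n → Fin n → ℝ)
    (p : (Fin n → Fin c → ℝ) × (Fin n → Fin c → ℝ)) : ℝ :=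
  ∑ i : Fin n, ∑ j : Fin n,
    (S i j * dlfhTheta lam p.1 p.2 i j
      - Real.log (1 + Real.exp (dlfhTheta lam p.1 p.2 i j)))

/-- The surrogate-gradient vector for an update of column `k` of `U`:
`b_i = (λ/c)·Σ_j (S_{ij} − A_{ij})·V_{jk} + (nλ²/(4c²))·U_{ik}`. -/
noncomputable def dlfhBU {n c : ℕ} (lam : ℝ) (S : Fin n → Fin n → ℝ)
    (U V : Fin n → Fin c → ℝ) (k : Fin c) (i : Fin n) : ℝ :=
  (lam / c) * (∑ j : Fin n, (S i j - logistic (dlfhTheta lam U V i j)) * V j k)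
    + (n * lam ^ 2 / (4 * c ^ 2)) * U i k

/-- The surrogate-gradient vector for an update of column `k` of `V`:
`b_j = (λ/c)·Σ_i (S_{ij} − A_{ij})·U_{ik} + (nλ²/(4c²))·V_{jk}`. -/
noncomputable def dlfhBV {n c : ℕ} (lam : ℝ) (S : Fin n → Fin n → ℝ)
    (U V : Fin n → Fin c → ℝ) (k : Fin c) (j : Fin n) : ℝ :=
  (lam / c) * (∑ i : Fin n, (S i j - logistic (dlfhTheta lam U V i j)) * U i k)
    + (n * lam ^ 2 / (4 * c ^ 2)) * V j k

/-- A single-column update step of Algorithm 1: one column of `U` (rule (3)) or one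
column of `V` (rule (4)) is replaced by a `±1` vector maximizing the linear
surrogate, all other entries being unchanged. -/
def DLFHStep {n c : ℕ} (lam : ℝ) (S : Fin n → Fin n → ℝ)
    (p p' : (Fin n → Fin c → ℝ) × (Fin n → Fin c → ℝ)) : Prop :=
  (∃ k : Fin c,
    p'.2 = p.2 ∧
    (∀ i, ∀ k' ≠ k, p'.1 i k' = p.1 i k') ∧
    (∀ i, p'.1 i k = 1 ∨ p'.1 i k = -1) ∧
    (∀ i, p'.1 i k * dlfhBU lam S p.1 p.2 k i = |dlfhBU lam S p.1 p.2 k i|)) ∨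
  (∃ k : Fin c,
    p'.1 = p.1 ∧
    (∀ j, ∀ k' ≠ k, p'.2 j k' = p.2 j k') ∧
    (∀ j, p'.2 j k = 1 ∨ p'.2 j k = -1) ∧
    (∀ j, p'.2 j k * dlfhBV lam S p.1 p.2 k j = |dlfhBV lam S p.1 p.2 k j|))

/-!
The softplus function `log (1 + exp θ)` has derivative `sigmoid θ` and second derivative
`sigmoid θ * (1 - sigmoid θ) ≤ 1/4`, so each term of `L` is bounded below by its linearization
at the current `Θ` minus `(Δθ)² / 8`. Changing column `k` of `U` moves `Θ_{ij}` by
`(λ/c) (u'_i - u_i) V_{jk}`; since all entries are `±1`, the resulting lower bound on the gain of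
row `i` is exactly `(u'_i - u_i) b_i = |b_i| - u_i b_i ≥ 0`. Updates of `V` are the same after
transposing `S` and swapping `U` and `V`, and induction over the steps finishes the proof.
-/

open Real

lemma le_add_mul_sub_add_sq_of_hasDerivAt_of_le {f f' f'' : ℝ → ℝ} {M : ℝ}
    (hf : ∀ x, HasDerivAt f (f' x) x) (hf' : ∀ x, HasDerivAt f' (f'' x) x)
    (hM : ∀ x, f'' x ≤ M) (x y : ℝ) :
    f y ≤ f x + f' x * (y - x) + M / 2 * (y - x) ^ 2 := by
  set φ : ℝ → ℝ := fun z => f x + f' x * (z - x) + M / 2 * (z - x) ^ 2 - f z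
  have hφ : ∀ z, HasDerivAt φ (f' x + M * (z - x) - f' z) z := fun z => by
    have hlin := (hasDerivAt_id' z).sub_const x
    have hsq : HasDerivAt (fun z => (z - x) ^ 2) (2 * (z - x)) z := by simpa using hlin.fun_pow 2
    exact (((hlin.const_mul (f' x)).const_add (f x)).add (hsq.const_mul (M / 2))).sub (hf z)
      |>.congr_deriv (by ring)
  have hφ' : ∀ z, HasDerivAt (fun z => f' x + M * (z - x) - f' z) (M - f'' z) z := fun z =>
    ((((hasDerivAt_id' z).sub_const x).const_mul M).const_add (f' x)).sub (hf' z)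
      |>.congr_deriv (by ring)
  have hconvex : ConvexOn ℝ Set.univ φ :=
    convexOn_of_hasDerivWithinAt2_nonneg convex_univ
      (fun z _ => (hφ z).continuousAt.continuousWithinAt) (fun z _ => (hφ z).hasDerivWithinAt)
      (fun z _ => (hφ' z).hasDerivWithinAt) fun z _ => sub_nonneg.2 (hM z)
  have hmin : IsMinOn φ Set.univ x := by
    refine hconvex.isMinOn_of_rightDeriv_eq_zero (by simp) ?_
    rw [(hφ x).hasDerivWithinAt.derivWithin (uniqueDiffWithinAt_Ioi x)]
    ring
  have : φ x ≤ φ y := hmin (Set.mem_univ y)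
  norm_num [φ] at this
  linarith

lemma logistic_eq_sigmoid (t : ℝ) : logistic t = sigmoid t := one_div _

lemma hasDerivAt_log_one_add_exp (x : ℝ) :
    HasDerivAt (fun x => log (1 + exp x)) (sigmoid x) x := by
  convert ((hasDerivAt_exp x).const_add 1).log (by positivity) using 1
  rw [sigmoid_def, exp_neg]
  field_simp
  ring

lemma log_one_add_exp_le (θ θ' : ℝ) :
    log (1 + exp θ') ≤ log (1 + exp θ) + sigmoid θ * (θ' - θ) + (θ' - θ) ^ 2 / 8 := by
  have h := le_add_mul_sub_add_sq_of_hasDerivAt_of_le (M := 1 / 4) hasDerivAt_log_one_add_exp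
    hasDerivAt_sigmoid (fun x => by nlinarith [sq_nonneg (2 * sigmoid x - 1)]) θ θ'
  linarith

lemma sub_log_one_add_exp_sub_ge (s θ θ' : ℝ) :
    (s - logistic θ) * (θ' - θ) - (θ' - θ) ^ 2 / 8 ≤
      (s * θ' - log (1 + exp θ')) - (s * θ - log (1 + exp θ)) := by
  rw [logistic_eq_sigmoid]
  linarith [log_one_add_exp_le θ θ']

lemma sub_mul_nonneg_of_mul_eq_abs {u u' b : ℝ} (hu : u = 1 ∨ u = -1) (hu' : u' * b = |b|) :
    0 ≤ (u' - u) * b := by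
  rcases hu with rfl | rfl <;> linarith [le_abs_self b, neg_abs_le b]

lemma eq_one_or_eq_neg_one_of_eq_off_column {n c : ℕ} {U U' : Fin n → Fin c → ℝ} {k : Fin c}
    (hU : ∀ i k, U i k = 1 ∨ U i k = -1) (hoff : ∀ i, ∀ k' ≠ k, U' i k' = U i k')
    (hk : ∀ i, U' i k = 1 ∨ U' i k = -1) (i : Fin n) (k' : Fin c) :
    U' i k' = 1 ∨ U' i k' = -1 := by
  by_cases h : k' = k
  · exact h ▸ hk i
  · exact hoff i k' h ▸ hU i k'

section Column

variable {n c : ℕ} (lam : ℝ) (S : Fin n → Fin n → ℝ)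

lemma dlfhTheta_of_eq_off_column {U U' V : Fin n → Fin c → ℝ} {k : Fin c}
    (hoff : ∀ i, ∀ k' ≠ k, U' i k' = U i k') (i j : Fin n) :
    dlfhTheta lam U' V i j = dlfhTheta lam U V i j + lam / c * ((U' i k - U i k) * V j k) := by
  have hdiff : ∑ k', (U' i k' * V j k' - U i k' * V j k') = (U' i k - U i k) * V j k := by
    rw [Fintype.sum_eq_single k fun k' hk' => by rw [hoff i k' hk', sub_self]]
    ring
  rw [Finset.sum_sub_distrib] at hdiff
  unfold dlfhTheta
  linear_combination lam / c * hdiff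

lemma sub_mul_dlfhBU_le {U U' V : Fin n → Fin c → ℝ} {k : Fin c}
    (hoff : ∀ i, ∀ k' ≠ k, U' i k' = U i k') (i : Fin n)
    (hu : U i k = 1 ∨ U i k = -1) (hu' : U' i k = 1 ∨ U' i k = -1)
    (hv : ∀ j, V j k = 1 ∨ V j k = -1) :
    (U' i k - U i k) * dlfhBU lam S U V k i ≤
      ∑ j, ((S i j * dlfhTheta lam U' V i j - log (1 + exp (dlfhTheta lam U' V i j)))
        - (S i j * dlfhTheta lam U V i j - log (1 + exp (dlfhTheta lam U V i j)))) := by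
  have hterm : ∀ j, (S i j - logistic (dlfhTheta lam U V i j)) *
        (lam / c * ((U' i k - U i k) * V j k)) - (lam / c * ((U' i k - U i k) * V j k)) ^ 2 / 8
      = lam / c * (U' i k - U i k) * ((S i j - logistic (dlfhTheta lam U V i j)) * V j k)
        - (lam / c) ^ 2 * (U' i k - U i k) ^ 2 / 8 := fun j => by
    linear_combination (-(lam / c) ^ 2 * (U' i k - U i k) ^ 2 / 8) * sq_eq_one_iff.2 (hv j)
  calc (U' i k - U i k) * dlfhBU lam S U V k i
      = ∑ j, ((S i j - logistic (dlfhTheta lam U V i j)) *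
          (lam / c * ((U' i k - U i k) * V j k))
          - (lam / c * ((U' i k - U i k) * V j k)) ^ 2 / 8) := by
        rw [Finset.sum_congr rfl fun j _ => hterm j, Finset.sum_sub_distrib, ← Finset.mul_sum,
          Finset.sum_const, Finset.card_univ, Fintype.card_fin, nsmul_eq_mul, dlfhBU]
        -- `(u' - u)² = 2 - 2 u' u` for signs produces the term `(nλ²/(4c²)) U_{ik}` of `b_i`
        linear_combination (n * lam ^ 2 / (8 * c ^ 2)) *
          (sq_eq_one_iff.2 hu' - sq_eq_one_iff.2 hu)
    _ ≤ _ := Finset.sum_le_sum fun j _ => by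
        simpa only [dlfhTheta_of_eq_off_column lam hoff i j, add_sub_cancel_left] using
          sub_log_one_add_exp_sub_ge (S i j) (dlfhTheta lam U V i j) (dlfhTheta lam U' V i j)

theorem dlfhObj_le_of_update_column_U {U U' V : Fin n → Fin c → ℝ} {k : Fin c}
    (hu : ∀ i, U i k = 1 ∨ U i k = -1) (hv : ∀ j, V j k = 1 ∨ V j k = -1)
    (hoff : ∀ i, ∀ k' ≠ k, U' i k' = U i k') (hu' : ∀ i, U' i k = 1 ∨ U' i k = -1)
    (hopt : ∀ i, U' i k * dlfhBU lam S U V k i = |dlfhBU lam S U V k i|) :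
    dlfhObj lam S (U, V) ≤ dlfhObj lam S (U', V) := by
  refine Finset.sum_le_sum fun i _ => ?_
  have hgain := (sub_mul_nonneg_of_mul_eq_abs (hu i) (hopt i)).trans
    (sub_mul_dlfhBU_le lam S hoff i (hu i) (hu' i) hv)
  rw [Finset.sum_sub_distrib] at hgain
  exact sub_nonneg.1 hgain

lemma dlfhTheta_swap (U V : Fin n → Fin c → ℝ) (i j : Fin n) :
    dlfhTheta lam V U j i = dlfhTheta lam U V i j := by
  simp only [dlfhTheta, mul_comm (V j _)]

lemma dlfhObj_swap (U V : Fin n → Fin c → ℝ) :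
    dlfhObj lam (fun i j => S j i) (V, U) = dlfhObj lam S (U, V) := by
  simp only [dlfhObj, dlfhTheta_swap lam U V]
  exact Finset.sum_comm

lemma dlfhBV_eq_dlfhBU_swap (U V : Fin n → Fin c → ℝ) (k : Fin c) (j : Fin n) :
    dlfhBV lam S U V k j = dlfhBU lam (fun i j => S j i) V U k j := by
  simp only [dlfhBU, dlfhBV, dlfhTheta_swap lam U V]

theorem dlfhObj_le_of_update_column_V {U V V' : Fin n → Fin c → ℝ} {k : Fin c}
    (hu : ∀ i, U i k = 1 ∨ U i k = -1) (hv : ∀ j, V j k = 1 ∨ V j k = -1)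
    (hoff : ∀ j, ∀ k' ≠ k, V' j k' = V j k') (hv' : ∀ j, V' j k = 1 ∨ V' j k = -1)
    (hopt : ∀ j, V' j k * dlfhBV lam S U V k j = |dlfhBV lam S U V k j|) :
    dlfhObj lam S (U, V) ≤ dlfhObj lam S (U, V') := by
  simp only [dlfhBV_eq_dlfhBU_swap] at hopt
  simpa only [dlfhObj_swap] using
    dlfhObj_le_of_update_column_U lam (fun i j => S j i) hv hu hoff hv' hopt

end Column

def IsSignPair {n c : ℕ} (p : (Fin n → Fin c → ℝ) × (Fin n → Fin c → ℝ)) : Prop :=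
  (∀ i k, p.1 i k = 1 ∨ p.1 i k = -1) ∧ ∀ j k, p.2 j k = 1 ∨ p.2 j k = -1

lemma DLFHStep.isSignPair_and_dlfhObj_le {n c : ℕ} {lam : ℝ} {S : Fin n → Fin n → ℝ}
    {p p' : (Fin n → Fin c → ℝ) × (Fin n → Fin c → ℝ)} (hstep : DLFHStep lam S p p')
    (hp : IsSignPair p) : IsSignPair p' ∧ dlfhObj lam S p ≤ dlfhObj lam S p' := by
  obtain ⟨U, V⟩ := p
  obtain ⟨U', V'⟩ := p'
  obtain ⟨hU, hV⟩ := hp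
  rcases hstep with ⟨k, rfl, hoff, hk, hopt⟩ | ⟨k, rfl, hoff, hk, hopt⟩
  · exact ⟨⟨eq_one_or_eq_neg_one_of_eq_off_column hU hoff hk, hV⟩,
      dlfhObj_le_of_update_column_U lam S (hU · k) (hV · k) hoff hk hopt⟩
  · exact ⟨⟨hU, eq_one_or_eq_neg_one_of_eq_off_column hV hoff hk⟩,
      dlfhObj_le_of_update_column_V lam S (hU · k) (hV · k) hoff hk hopt⟩

theorem dlfh_full_iteration_ascent_general (n c : ℕ)
    (lam : ℝ)
    (S : Fin n → Fin n → ℝ)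
    (p p' : (Fin n → Fin c → ℝ) × (Fin n → Fin c → ℝ))
    (hU : ∀ i k, p.1 i k = 1 ∨ p.1 i k = -1)
    (hV : ∀ j k, p.2 j k = 1 ∨ p.2 j k = -1)
    (hsteps : Relation.ReflTransGen (DLFHStep lam S) p p') :
    dlfhObj lam S p ≤ dlfhObj lam S p' := by
  suffices IsSignPair p' ∧ dlfhObj lam S p ≤ dlfhObj lam S p' from this.2
  induction hsteps with
  | refl => exact ⟨⟨hU, hV⟩, le_rfl⟩
  | tail _ hstep ih =>
    obtain ⟨hsign, hle⟩ := ih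
    exact (hstep.isSignPair_and_dlfhObj_le hsign).imp_right hle.trans

/-- Any finite sequence of single-column updates (in particular one full iteration
of Algorithm 1, updating all `c` columns of `U` via rule (3) and then all `c`
columns of `V` via rule (4)) never decreases the DLFH objective. -/
theorem dlfh_full_iteration_ascent (n c : ℕ) (hn : 1 ≤ n) (hc : 1 ≤ c)
    (lam : ℝ) (hlam : 0 < lam)
    (S : Fin n → Fin n → ℝ)
    (hS : ∀ i j, S i j = 0 ∨ S i j = 1)
    (p p' : (Fin n → Fin c → ℝ) × (Fin n → Fin c → ℝ))
    (hU : ∀ i k, p.1 i k = 1 ∨ p.1 i k = -1)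
    (hV : ∀ j k, p.2 j k = 1 ∨ p.2 j k = -1)
    (hsteps : Relation.ReflTransGen (DLFHStep lam S) p p') :
    dlfhObj lam S p ≤ dlfhObj lam S p' :=
  dlfh_full_iteration_ascent_general n c lam S p p' hU hV hsteps
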